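/- Let X be a real d×d matrix, P a real orthogonal d×d matrix, and Σ a real diagonal d×d matrix with nonnegative diagonal entries σ₁², …, σ_d², such that Xᵀ X = Pᵀ Σ P. Let O be any real orthogonal d×d matrix and for i < j set G_{ij} := Pᵀ (E_{ij} − E_{ji}) P O. Then for all i < j and k < l, tr( (X G_{ij}) (X G_{kl})ᵀ ) = (σ_i² + σ_j²) if (i,j) = (k,l), and = 0 otherwise. -/

import Mathlib

/-!
Since `O` and `P` are orthogonal, they drop out of `tr(Y Zᵀ)`, and `XᵀX = Pᵀ Σ P` turns the
trace into `tr((E_ij - E_ji) (E_km - E_mk)ᵀ Σ) = σ_i² (E_km - E_mk)_ij - σ_j² (E_km - E_mk)_ji`.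
For `i < j` and `k < m` only the entry `(E_km)_ij` can be nonzero.
-/

open scoped Matrix
open Matrix

section

variable {n R : Type*}

theorem mul_mul_transpose_mul_of_mul_transpose_eq_one [Fintype n] [DecidableEq n] [CommSemiring R]
    {O : Matrix n n R} (hO : O * Oᵀ = 1) (Y Z : Matrix n n R) : Y * O * (Z * O)ᵀ = Y * Zᵀ := by
  rw [transpose_mul, Matrix.mul_assoc, ← Matrix.mul_assoc O, hO, Matrix.one_mul]

theorem trace_mul_mul_transpose_mul [Fintype n] [CommSemiring R] (Y A B : Matrix n n R) :
    trace (Y * A * (Y * B)ᵀ) = trace (A * (Bᵀ * (Yᵀ * Y))) := by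
  rw [transpose_mul, trace_mul_cycle', ← Matrix.mul_assoc, trace_mul_cycle']
  simp only [Matrix.mul_assoc]

theorem trace_sub_single_mul_diagonal [Fintype n] [DecidableEq n] [CommRing R] (i j : n)
    (B : Matrix n n R) (s : n → R) :
    trace ((single i j 1 - single j i 1) * (Bᵀ * diagonal s)) = s i * B i j - s j * B j i := by
  simp only [Matrix.sub_mul, trace_sub, trace_single_mul, mul_diagonal, transpose_apply, one_smul,
    mul_comm]

variable [LinearOrder n] [Ring R] {i j k m : n}

theorem sub_single_apply_of_lt (hij : i < j) (hkm : k < m) :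
    (single k m 1 - single m k 1 : Matrix n n R) i j = if (i, j) = (k, m) then 1 else 0 := by
  have hne : ¬(m = i ∧ k = j) := by
    rintro ⟨rfl, rfl⟩
    exact lt_asymm hij hkm
  simp only [Matrix.sub_apply, Matrix.single_apply, if_neg hne, sub_zero, Prod.mk.injEq]
  simp only [eq_comm]

theorem sub_single_apply_swap_of_lt (hij : i < j) (hkm : k < m) :
    (single k m 1 - single m k 1 : Matrix n n R) j i = -if (i, j) = (k, m) then 1 else 0 := by
  have hne : ¬(k = j ∧ m = i) := by
    rintro ⟨rfl, rfl⟩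
    exact lt_asymm hij hkm
  simp only [Matrix.sub_apply, Matrix.single_apply, if_neg hne, zero_sub, Prod.mk.injEq]
  simp only [eq_comm, and_comm]

end

theorem pullback_metric_right_orthogonal_action_general
    (d : ℕ) (X P O : Matrix (Fin d) (Fin d) ℝ)
    (hP' : P * Pᵀ = 1)
    (hO' : O * Oᵀ = 1)
    (s : Fin d → ℝ)
    (hX : Xᵀ * X = Pᵀ * Matrix.diagonal s * P)
    (i j k m : Fin d) (hij : i < j) (hkm : k < m) :
    Matrix.trace
        ((X * (Pᵀ * (Matrix.single i j (1 : ℝ) - Matrix.single j i 1) * P * O))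
          * (X * (Pᵀ * (Matrix.single k m (1 : ℝ) - Matrix.single m k 1) * P * O))ᵀ)
      = if (i, j) = (k, m) then s i + s j else 0 := by
  have hGram : (X * Pᵀ)ᵀ * (X * Pᵀ) = diagonal s := by
    rw [transpose_mul, transpose_transpose, Matrix.mul_assoc, ← Matrix.mul_assoc Xᵀ, hX,
      Matrix.mul_assoc _ P, hP', Matrix.mul_one, ← Matrix.mul_assoc, hP', Matrix.one_mul]
  have hregroup (A : Matrix (Fin d) (Fin d) ℝ) : X * (Pᵀ * A * P * O) = X * Pᵀ * A * P * O := by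
    simp only [Matrix.mul_assoc]
  rw [hregroup, hregroup, mul_mul_transpose_mul_of_mul_transpose_eq_one hO',
    mul_mul_transpose_mul_of_mul_transpose_eq_one hP', trace_mul_mul_transpose_mul, hGram,
    trace_sub_single_mul_diagonal, sub_single_apply_of_lt hij hkm, sub_single_apply_swap_of_lt hij hkm]
  split_ifs <;> ring

/-- Let `X` be a real `d×d` matrix, `P` orthogonal, and `Σ = diagonal s`
with nonnegative entries `s i = σ_i²`, such that `Xᵀ X = Pᵀ Σ P`.  Let `O` be orthogonal
and set `G i j := Pᵀ (E i j - E j i) P O` for `i < j`.  Then for `i < j` and `k < l`,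
`tr((X G i j)(X G k l)ᵀ) = σ_i² + σ_j²` if `(i,j) = (k,l)`, and `= 0` otherwise. -/
theorem pullback_metric_right_orthogonal_action
    (d : ℕ) (X P O : Matrix (Fin d) (Fin d) ℝ)
    (hP : Pᵀ * P = 1) (hP' : P * Pᵀ = 1)
    (hO : Oᵀ * O = 1) (hO' : O * Oᵀ = 1)
    (s : Fin d → ℝ) (hs : ∀ i, 0 ≤ s i)
    (hX : Xᵀ * X = Pᵀ * Matrix.diagonal s * P)
    (i j k m : Fin d) (hij : i < j) (hkm : k < m) :
    Matrix.trace
        ((X * (Pᵀ * (Matrix.single i j (1 : ℝ) - Matrix.single j i 1) * P * O))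
          * (X * (Pᵀ * (Matrix.single k m (1 : ℝ) - Matrix.single m k 1) * P * O))ᵀ)
      = if (i, j) = (k, m) then s i + s j else 0 :=
  pullback_metric_right_orthogonal_action_general d X P O hP' hO' s hX i j k m hij hkm
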